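/- arXiv:0903.3245 — 7 statements merged into one kernel-verified Lean document; each statement's English description precedes it below -/
import Mathlib

section
/- Let {X_i, Y_i, f_i} be a CIS, X a topological space, and φ_i : X_i → X embeddings with X = ⋃_i φ_i(X_i), satisfying: (L.4) φ_i(X_i) ∩ φ_j(X_j) = ∅ whenever f_i and f_j are not semicomponible; (L.5) φ_j(f_{i,j-1}(y)) = φ_i(y) for all y ∈ Y_{i,j-1} whenever f_i and f_j are semicomponible with i < j; (L.6) φ_i(X_i − Y_{i,j-1}) ∩ φ_j(X_j − f_{i,j-1}(Y_{i,j-1})) = ∅ whenever f_i and f_j are semicomponible with i < j. Then {X, φ_i} is a limit space for {X_i, Y_i, f_i}. -/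
universe u v w

/-- A closed injective system (CIS): nonempty topological spaces `X i`, closed subspaces
`Y i ⊆ X i`, and closed injective continuous maps `f i : Y i → X (i+1)`, modeled as total
maps `f i : X i → X (i+1)` whose relevant properties are only required on `Y i`. -/
structure CIS where
  X : ℕ → Type u
  topX : ∀ i, TopologicalSpace (X i)
  nonemptyX : ∀ i, Nonempty (X i)
  Y : ∀ i, Set (X i)
  closedY : ∀ i, IsClosed (Y i)
  f : ∀ i, X i → X (i + 1)
  f_contOn : ∀ i, ContinuousOn (f i) (Y i)
  f_injOn : ∀ i, Set.InjOn (f i) (Y i)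
  f_closedOn : ∀ i (C : Set (X i)), IsClosed C → C ⊆ Y i → IsClosed (f i '' C)

instance (S : CIS) (i : ℕ) : TopologicalSpace (S.X i) := S.topX i

/-- The iterated composition `f_{j-1} ∘ ⋯ ∘ f_i : X i → X j` (total extension of `f_{i,j-1}`). -/
def CIS.T (S : CIS) {i j : ℕ} (h : i ≤ j) (x : S.X i) : S.X j :=
  Nat.leRecOn h (fun {k} y => S.f k y) x

/-- The set `Y_{i,j}` (domain of `f_{i,j}`): points of `Y i` whose iterated images remain in
the sets `Y k` for all `i ≤ k ≤ j`. -/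
def CIS.YY (S : CIS) (i j : ℕ) : Set (S.X i) :=
  {x | ∀ k, ∀ h : i ≤ k, k ≤ j → S.T h x ∈ S.Y k}

/-- `f i` and `f j` are semicomponible (`i ≤ j`): every map is semicomponible with itself,
and for `i < j` semicomponibility means that the domain `Y_{i,j}` is nonempty. -/
def CIS.Semicomp (S : CIS) (i j : ℕ) : Prop :=
  i = j ∨ (i < j ∧ (S.YY i j).Nonempty)

/-- A limit space `{L, φ}` for a CIS. -/
structure IsLimitSpace (S : CIS) (L : Type v) [TopologicalSpace L]
    (φ : ∀ i, S.X i → L) : Prop where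
  covers : ⋃ i, Set.range (φ i) = Set.univ
  embedding : ∀ i, Topology.IsEmbedding (φ i)
  l3 : ∀ i j, ∀ hij : i < j, S.Semicomp i j →
    Set.range (φ i) ∩ Set.range (φ j) = φ j '' (S.T hij.le '' S.YY i (j - 1))
  l3' : ∀ i j, ∀ hij : i < j, S.Semicomp i j → ∀ (xi : S.X i) (xj : S.X j),
    φ i xi = φ j xj → xi ∈ S.YY i (j - 1) ∧ xj = S.T hij.le xi
  l4 : ∀ i j, i < j → ¬ S.Semicomp i j → Set.range (φ i) ∩ Set.range (φ j) = ∅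

/-- A fundamental limit space: a limit space whose topology is the weak topology
induced by the maps `φ i`. -/
structure IsFundamentalLimitSpace (S : CIS) (L : Type v) [TopologicalSpace L]
    (φ : ∀ i, S.X i → L) extends IsLimitSpace S L φ : Prop where
  weakTopology : ∀ A : Set L, IsClosed A ↔ ∀ i, IsClosed (φ i ⁻¹' A)

/-- A cis-morphism between closed injective systems. -/
structure CISMorphism (S S' : CIS) where
  h : ∀ i, S.X i → S'.X i
  cont : ∀ i, Continuous (h i)
  closedMap : ∀ i, IsClosedMap (h i)
  mapsY : ∀ i, h i '' S.Y i ⊆ S'.Y i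
  comm : ∀ i, ∀ y ∈ S.Y i, h (i + 1) (S.f i y) = S'.f i (h i y)

/-- A cis-isomorphism: each `h i` is a homeomorphism carrying `Y i` onto `Y' i`. -/
def CISMorphism.IsIso {S S' : CIS} (m : CISMorphism S S') : Prop :=
  ∀ i, Function.Bijective (m.h i) ∧ m.h i '' S.Y i = S'.Y i

/-- The generating relation identifying each `y ∈ Y i` with `f i y ∈ X (i+1)`. -/
def CIS.Rel0 (S : CIS) (a b : Σ i, S.X i) : Prop :=
  a.2 ∈ S.Y a.1 ∧ b = ⟨a.1 + 1, S.f a.1 a.2⟩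

/-- The relation `~` on the coproduct `⨿ X i` for an inductive CIS:
`⟨i, x⟩ ~ ⟨j, y⟩` iff `y = f_i^j x` when `i ≤ j`, and `x = f_j^i y` when `j < i`. -/
def CIS.IndRel (S : CIS) (a b : Σ i, S.X i) : Prop :=
  (∀ h : a.1 ≤ b.1, S.T h a.2 = b.2) ∧ (∀ h : b.1 < a.1, S.T h.le b.2 = a.2)

/-- A CIS is finitely semicomponible if for each `i` only finitely many `j` are such that
`f i, f j` (or `f j, f i`) are semicomponible. -/
def CIS.FinitelySemicomp (S : CIS) : Prop :=
  ∀ i, {j | S.Semicomp i j ∨ S.Semicomp j i}.Finite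

theorem stmt5 (S : CIS) (L : Type v) [TopologicalSpace L] (φ : ∀ i, S.X i → L)
    (hemb : ∀ i, Topology.IsEmbedding (φ i))
    (hcov : ⋃ i, Set.range (φ i) = Set.univ)
    (hL4 : ∀ i j, i < j → ¬ S.Semicomp i j →
      Set.range (φ i) ∩ Set.range (φ j) = ∅)
    (hL5 : ∀ i j, ∀ hij : i < j, S.Semicomp i j →
      ∀ y ∈ S.YY i (j - 1), φ j (S.T hij.le y) = φ i y)
    (hL6 : ∀ i j, ∀ hij : i < j, S.Semicomp i j →
      φ i '' (S.YY i (j - 1))ᶜ ∩ φ j '' (S.T hij.le '' S.YY i (j - 1))ᶜ = ∅) :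
    IsLimitSpace S L φ := by
  have key : ∀ i j, ∀ hij : i < j, S.Semicomp i j → ∀ (xi : S.X i) (xj : S.X j),
      φ i xi = φ j xj → xi ∈ S.YY i (j - 1) ∧ xj = S.T hij.le xi := by
    intro i j hij hsc xi xj heq
    have hxi : xi ∈ S.YY i (j - 1) := by
      by_contra hni
      have h6 := hL6 i j hij hsc
      have hxj : xj ∈ S.T hij.le '' S.YY i (j - 1) := by
        by_contra hnj
        have hmem : φ i xi ∈ φ i '' (S.YY i (j - 1))ᶜ ∩
            φ j '' (S.T hij.le '' S.YY i (j - 1))ᶜ :=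
          ⟨⟨xi, hni, rfl⟩, ⟨xj, hnj, heq.symm⟩⟩
        rw [h6] at hmem
        exact hmem
      obtain ⟨y, hy, hyx⟩ := hxj
      have h5 : φ j xj = φ i y := by rw [← hyx]; exact hL5 i j hij hsc y hy
      have : xi = y := (hemb i).injective (heq.trans h5)
      exact hni (this ▸ hy)
    refine ⟨hxi, (hemb j).injective ?_⟩
    rw [← heq, hL5 i j hij hsc xi hxi]
  refine ⟨hcov, hemb, ?_, key, hL4⟩
  intro i j hij hsc
  ext z
  constructor
  · rintro ⟨⟨xi, rfl⟩, ⟨xj, hxj⟩⟩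
    obtain ⟨hY, hT⟩ := key i j hij hsc xi xj hxj.symm
    exact ⟨S.T hij.le xi, ⟨xi, hY, rfl⟩, by rw [← hT]; exact hxj⟩
  · rintro ⟨_, ⟨y, hy, rfl⟩, rfl⟩
    exact ⟨⟨y, (hL5 i j hij hsc y hy).symm⟩, Set.mem_range_self _⟩
end

section
/- Let {X_i, Y_i, f_i} be a CIS and let {X, φ_i} and {Z, ψ_i} be two limit spaces for it. Then there is a unique bijection β : X → Z (not necessarily continuous) such that ψ_i = β ∘ φ_i for all i ∈ ℕ. -/
universe u v w

lemma CIS.T_succ (S : CIS) {i j : ℕ} (h : i ≤ j) (h' : i ≤ j + 1) (x : S.X i) :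
    S.T h' x = S.f j (S.T h x) :=
  Nat.leRecOn_succ h x

lemma CIS.injT (S : CIS) {i j : ℕ} (h : i ≤ j) :
    Set.InjOn (S.T h) {x | ∀ k, ∀ hk : i ≤ k, k < j → S.T hk x ∈ S.Y k} := by
  induction j, h using Nat.le_induction with
  | base =>
    intro x _ y _ hxy
    rwa [CIS.T, Nat.leRecOn_self, CIS.T, Nat.leRecOn_self] at hxy
  | succ j hij IH =>
    intro x hx y hy hxy
    rw [S.T_succ hij (by omega), S.T_succ hij (by omega)] at hxy
    have hxj : S.T hij x ∈ S.Y j := hx j hij (Nat.lt_succ_self j)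
    have hyj : S.T hij y ∈ S.Y j := hy j hij (Nat.lt_succ_self j)
    have : S.T hij x = S.T hij y := S.f_injOn j hxj hyj hxy
    exact IH (fun k hk hkj => hx k hk (hkj.trans (Nat.lt_succ_self j)))
      (fun k hk hkj => hy k hk (hkj.trans (Nat.lt_succ_self j))) this

lemma CIS.yy_subset (S : CIS) {i j : ℕ} (hij : i < j) :
    S.YY i (j - 1) ⊆ {x | ∀ k, ∀ hk : i ≤ k, k < j → S.T hk x ∈ S.Y k} :=
  fun x hx k hk hkj => hx k hk (by omega)

lemma key_lemma (S : CIS) {L : Type v} [TopologicalSpace L] {φ : ∀ i, S.X i → L}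
    {Z : Type w} [TopologicalSpace Z] {ψ : ∀ i, S.X i → Z}
    (hL : IsLimitSpace S L φ) (hZ : IsLimitSpace S Z ψ)
    {i j : ℕ} (hij : i < j) (xi : S.X i) (xj : S.X j)
    (h : φ i xi = φ j xj) : ψ i xi = ψ j xj := by
  have hsc : S.Semicomp i j := by
    by_contra hns
    have h4 := hL.l4 i j hij hns
    have : φ i xi ∈ Set.range (φ i) ∩ Set.range (φ j) :=
      ⟨⟨xi, rfl⟩, ⟨xj, h.symm⟩⟩
    rw [h4] at this
    exact this
  obtain ⟨hxiY, hxj⟩ := hL.l3' i j hij hsc xi xj h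
  have hmem : ψ j xj ∈ Set.range (ψ i) ∩ Set.range (ψ j) := by
    rw [hZ.l3 i j hij hsc]
    exact ⟨S.T hij.le xi, ⟨xi, hxiY, rfl⟩, by rw [hxj]⟩
  obtain ⟨⟨xi', hxi'⟩, -⟩ := hmem
  obtain ⟨hxi'Y, hxj'⟩ := hZ.l3' i j hij hsc xi' xj hxi'
  have hxx : xi' = xi :=
    S.injT hij.le (S.yy_subset hij hxi'Y) (S.yy_subset hij hxiY)
      (hxj'.symm.trans hxj)
  rw [← hxx, hxi']

lemma key_all (S : CIS) {L : Type v} [TopologicalSpace L] {φ : ∀ i, S.X i → L}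
    {Z : Type w} [TopologicalSpace Z] {ψ : ∀ i, S.X i → Z}
    (hL : IsLimitSpace S L φ) (hZ : IsLimitSpace S Z ψ)
    {i j : ℕ} (xi : S.X i) (xj : S.X j)
    (h : φ i xi = φ j xj) : ψ i xi = ψ j xj := by
  rcases Nat.lt_trichotomy i j with hij | rfl | hij
  · exact key_lemma S hL hZ hij xi xj h
  · rw [(hL.embedding i).injective h]
  · exact (key_lemma S hL hZ hij xj xi h.symm).symm

theorem stmt6 (S : CIS) (L : Type v) [TopologicalSpace L] (φ : ∀ i, S.X i → L)
    (Z : Type w) [TopologicalSpace Z] (ψ : ∀ i, S.X i → Z)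
    (hL : IsLimitSpace S L φ) (hZ : IsLimitSpace S Z ψ) :
    ∃! β : L → Z, Function.Bijective β ∧ ∀ i, ψ i = β ∘ φ i := by
  have hcov : ∀ x : L, ∃ p : Σ i, S.X i, φ p.1 p.2 = x := by
    intro x
    have hx : x ∈ ⋃ i, Set.range (φ i) := hL.covers ▸ Set.mem_univ x
    obtain ⟨_, ⟨i, rfl⟩, xi, hxi⟩ := hx
    exact ⟨⟨i, xi⟩, hxi⟩
  choose P hP using hcov
  refine ⟨fun x => ψ (P x).1 (P x).2, ⟨⟨?_, ?_⟩, ?_⟩, ?_⟩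
  · -- injective
    intro x y hxy
    have := key_all S hZ hL (P x).2 (P y).2 hxy
    rw [hP x, hP y] at this
    exact this
  · -- surjective
    intro z
    have hz : z ∈ ⋃ i, Set.range (ψ i) := hZ.covers ▸ Set.mem_univ z
    obtain ⟨_, ⟨i, rfl⟩, xi, hxi⟩ := hz
    refine ⟨φ i xi, ?_⟩
    rw [← hxi]
    exact key_all S hL hZ (P (φ i xi)).2 xi (hP (φ i xi))
  · -- commutes
    intro i
    funext xi
    exact (key_all S hL hZ (P (φ i xi)).2 xi (hP (φ i xi))).symm
  · -- uniqueness
    intro β' ⟨_, hβ'⟩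
    funext x
    have : β' (φ (P x).1 (P x).2) = ψ (P x).1 (P x).2 :=
      (congrFun (hβ' (P x).1) (P x).2).symm
    rw [hP x] at this
    exact this
end

section
/- Let {X, φ_i} be a fundamental limit space for the CIS {X_i, Y_i, f_i}. Then φ_i(X_i) is a closed subset of X, for every i ∈ ℕ. -/
universe u v w

/-! In the weak topology, `φ i (X i)` is closed as soon as every `φ j ⁻¹' φ i (X i)` is closed
in `X j`. By (L.3) and (L.4) this preimage is empty, all of `X j`, the domain `Y_{j,i-1}` (for
`j < i`), or the image `f_{i,j-1}(Y_{i,j-1})` (for `i < j`). The last two are closed because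
each `f_{i,j}`, as a composite of the closed embeddings `f_k : Y_k → X_{k+1}`, is a closed
embedding of the closed set `Y_{i,j}`. -/

structure IsClosedEmbeddingOn {α β : Type*} [TopologicalSpace α] [TopologicalSpace β]
    (g : α → β) (A : Set α) : Prop where
  isClosed : IsClosed A
  continuousOn : ContinuousOn g A
  injOn : Set.InjOn g A
  isClosed_image : ∀ C ⊆ A, IsClosed C → IsClosed (g '' C)

theorem IsClosedEmbeddingOn.comp {α β γ : Type*} [TopologicalSpace α] [TopologicalSpace β]
    [TopologicalSpace γ] {g : α → β} {h : β → γ} {A : Set α} {B : Set β}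
    (hh : IsClosedEmbeddingOn h B) (hg : IsClosedEmbeddingOn g A) :
    IsClosedEmbeddingOn (h ∘ g) (A ∩ g ⁻¹' B) where
  isClosed := hg.continuousOn.preimage_isClosed_of_isClosed hg.isClosed hh.isClosed
  continuousOn :=
    hh.continuousOn.comp (hg.continuousOn.mono Set.inter_subset_left) fun _ hx => hx.2
  injOn := hh.injOn.comp (hg.injOn.mono Set.inter_subset_left) fun _ hx => hx.2
  isClosed_image C hC hCc := by
    rw [Set.image_comp]
    exact hh.isClosed_image _ (Set.image_subset_iff.mpr fun _ hx => (hC hx).2)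
      (hg.isClosed_image C (hC.trans Set.inter_subset_left) hCc)

namespace CIS

variable (S : CIS)

theorem T_succ_s7 {i j : ℕ} (h : i ≤ j) (h' : i ≤ j + 1) : S.T h' = S.f j ∘ S.T h :=
  funext fun x => Nat.leRecOn_succ h x

theorem T_self_succ (i : ℕ) (h : i ≤ i + 1) : S.T h = S.f i := by
  rw [S.T_succ_s7 le_rfl h]
  exact funext fun x => congrArg (S.f i) (Nat.leRecOn_self x)

theorem YY_self (i : ℕ) : S.YY i i = S.Y i := by
  ext x
  refine ⟨fun hx => ?_, fun hx k hik hki => ?_⟩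
  · simpa only [CIS.T, Nat.leRecOn_self] using hx i le_rfl le_rfl
  · obtain rfl := le_antisymm hki hik
    simpa only [CIS.T, Nat.leRecOn_self] using hx

theorem YY_succ {i j : ℕ} (h : i ≤ j + 1) :
    S.YY i (j + 1) = S.YY i j ∩ S.T h ⁻¹' S.Y (j + 1) := by
  ext x
  refine ⟨fun hx => ⟨fun k hik hkj => hx k hik (hkj.trans j.le_succ), hx _ h le_rfl⟩, ?_⟩
  rintro ⟨hx, hxY⟩ k hik hkj
  rcases Nat.le_succ_iff.mp hkj with hkj | rfl
  · exact hx k hik hkj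
  · exact hxY

theorem isClosedEmbeddingOn_f (i : ℕ) : IsClosedEmbeddingOn (S.f i) (S.Y i) where
  isClosed := S.closedY i
  continuousOn := S.f_contOn i
  injOn := S.f_injOn i
  isClosed_image C hC hCc := S.f_closedOn i C hCc hC

/-- The paper's `f_{i,j} = f_j ∘ ⋯ ∘ f_i` is a closed embedding of its domain `Y_{i,j}`. -/
theorem isClosedEmbeddingOn_T {i j : ℕ} (hij : i ≤ j) (h : i ≤ j + 1) :
    IsClosedEmbeddingOn (S.T h) (S.YY i j) := by
  induction j, hij using Nat.le_induction with
  | base => rw [S.T_self_succ, S.YY_self]; exact S.isClosedEmbeddingOn_f i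
  | succ j hij ih =>
    rw [S.T_succ_s7 (j.le_succ.trans' hij) h, S.YY_succ (j.le_succ.trans' hij)]
    exact (S.isClosedEmbeddingOn_f (j + 1)).comp (ih _)

end CIS

namespace IsLimitSpace

variable {S : CIS} {L : Type*} [TopologicalSpace L] {φ : ∀ i, S.X i → L}

theorem preimage_range_eq_empty (hL : IsLimitSpace S L φ) {i j : ℕ} (hij : i < j)
    (hsc : ¬ S.Semicomp i j) : φ j ⁻¹' Set.range (φ i) = ∅ ∧ φ i ⁻¹' Set.range (φ j) = ∅ := by
  have hdisj := Set.disjoint_iff_inter_eq_empty.mpr (hL.l4 i j hij hsc)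
  exact ⟨Set.preimage_eq_empty hdisj, Set.preimage_eq_empty hdisj.symm⟩

theorem preimage_range_of_lt (hL : IsLimitSpace S L φ) {i j : ℕ} (hij : i < j)
    (hsc : S.Semicomp i j) : φ j ⁻¹' Set.range (φ i) = S.T hij.le '' S.YY i (j - 1) := by
  rw [← Set.preimage_inter_range, hL.l3 i j hij hsc,
    (hL.embedding j).injective.preimage_image]

theorem preimage_range_of_gt (hL : IsLimitSpace S L φ) {i j : ℕ} (hij : i < j)
    (hsc : S.Semicomp i j) : φ i ⁻¹' Set.range (φ j) = S.YY i (j - 1) := by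
  obtain ⟨m, rfl⟩ : ∃ m, j = m + 1 := ⟨j - 1, by omega⟩
  have hinj := (S.isClosedEmbeddingOn_T (Nat.le_of_lt_succ hij) hij.le).injOn
  ext x
  refine ⟨fun ⟨y, hy⟩ => (hL.l3' i _ hij hsc x y hy.symm).1, fun hx => ?_⟩
  obtain ⟨⟨x', hx'⟩, -⟩ : φ (m + 1) (S.T hij.le x) ∈ Set.range (φ i) ∩ Set.range (φ (m + 1)) :=
    hL.l3 i _ hij hsc ▸ ⟨_, ⟨x, hx, rfl⟩, rfl⟩
  obtain ⟨hx'Y, hTx⟩ := hL.l3' i _ hij hsc x' _ hx'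
  exact ⟨_, by rw [← hx', hinj hx hx'Y hTx]⟩

theorem isClosed_preimage_range (hL : IsLimitSpace S L φ) (i j : ℕ) :
    IsClosed (φ j ⁻¹' Set.range (φ i)) := by
  rcases lt_trichotomy i j with hij | rfl | hji
  · by_cases hsc : S.Semicomp i j
    · obtain ⟨m, rfl⟩ : ∃ m, j = m + 1 := ⟨j - 1, by omega⟩
      rw [hL.preimage_range_of_lt hij hsc]
      have := S.isClosedEmbeddingOn_T (Nat.le_of_lt_succ hij) hij.le
      exact this.isClosed_image _ subset_rfl this.isClosed
    · simp only [(hL.preimage_range_eq_empty hij hsc).1, isClosed_empty]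
  · simp only [Set.preimage_range, isClosed_univ]
  · by_cases hsc : S.Semicomp j i
    · obtain ⟨m, rfl⟩ : ∃ m, i = m + 1 := ⟨i - 1, by omega⟩
      rw [hL.preimage_range_of_gt hji hsc]
      exact (S.isClosedEmbeddingOn_T (Nat.le_of_lt_succ hji) hji.le).isClosed
    · simp only [(hL.preimage_range_eq_empty hji hsc).2, isClosed_empty]

end IsLimitSpace

theorem stmt7 (S : CIS) (L : Type v) [TopologicalSpace L] (φ : ∀ i, S.X i → L)
    (hL : IsFundamentalLimitSpace S L φ) (i : ℕ) :
    IsClosed (Set.range (φ i)) :=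
  (hL.weakTopology _).mpr fun j => hL.isClosed_preimage_range i j
end

section
/- Let {X, φ_i} and {Z, ψ_i} be two limit spaces for the CIS {X_i, Y_i, f_i}. If {X, φ_i} is a fundamental limit space, then the unique bijection β : X → Z with ψ_i = β ∘ φ_i for all i is continuous. -/
universe u v w

theorem stmt9 (S : CIS) (L : Type v) [TopologicalSpace L] (φ : ∀ i, S.X i → L)
    (Z : Type w) [TopologicalSpace Z] (ψ : ∀ i, S.X i → Z)
    (hL : IsFundamentalLimitSpace S L φ) (hZ : IsLimitSpace S Z ψ)
    (β : L → Z) (hbij : Function.Bijective β) (hcomm : ∀ i, ψ i = β ∘ φ i) :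
    Continuous β := by
  rw [continuous_iff_isClosed]
  intro A hA
  rw [hL.weakTopology]
  intro i
  have : φ i ⁻¹' (β ⁻¹' A) = ψ i ⁻¹' A := by
    rw [hcomm i]; rfl
  rw [this]
  exact hA.preimage (hZ.embedding i).continuous
end

section
/- (Uniqueness of the fundamental limit space) Let {X, φ_i} and {Z, ψ_i} be two fundamental limit spaces for the CIS {X_i, Y_i, f_i}. Then there exists a homeomorphism β : X → Z such that ψ_i = β ∘ φ_i for all i ∈ ℕ, and β is the unique homeomorphism from X onto Z with this property. -/
universe u v w

lemma CIS.T_self (S : CIS) {i : ℕ} (h : i ≤ i) (x : S.X i) : S.T h x = x :=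
  Nat.leRecOn_self x

lemma CIS.YY_mono (S : CIS) {i j j' : ℕ} (h : j' ≤ j) : S.YY i j ⊆ S.YY i j' :=
  fun x hx k hk hk' => hx k hk (hk'.trans h)

lemma CIS.injOn_T (S : CIS) (i j : ℕ) (h : i < j) :
    Set.InjOn (S.T h.le) (S.YY i (j - 1)) := by
  induction j, h using Nat.le_induction with
  | base =>
    intro a ha b hb hab
    rw [S.T_succ le_rfl, S.T_succ le_rfl, S.T_self, S.T_self] at hab
    have ha' : a ∈ S.Y i := by have := ha i le_rfl le_rfl; rwa [S.T_self] at this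
    have hb' : b ∈ S.Y i := by have := hb i le_rfl le_rfl; rwa [S.T_self] at this
    exact S.f_injOn i ha' hb' hab
  | succ j hij IH =>
    intro a ha b hb hab
    have hle : i ≤ j := Nat.le_of_succ_le hij
    rw [S.T_succ hle, S.T_succ hle] at hab
    have ha' : a ∈ S.YY i (j - 1) := S.YY_mono (Nat.sub_le j 1) ha
    have hb' : b ∈ S.YY i (j - 1) := S.YY_mono (Nat.sub_le j 1) hb
    have haY : S.T hle a ∈ S.Y j := ha j hle le_rfl
    have hbY : S.T hle b ∈ S.Y j := hb j hle le_rfl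
    exact IH ha' hb' (S.f_injOn j haY hbY hab)

lemma compat_lt (S : CIS) {L : Type v} [TopologicalSpace L] {φ : ∀ i, S.X i → L}
    {Z : Type w} [TopologicalSpace Z] {ψ : ∀ i, S.X i → Z}
    (hL : IsLimitSpace S L φ) (hZ : IsLimitSpace S Z ψ)
    {i j : ℕ} (hij : i < j) {xi : S.X i} {xj : S.X j}
    (h : φ i xi = φ j xj) : ψ i xi = ψ j xj := by
  have hsc : S.Semicomp i j := by
    by_contra hns
    have h4 := hL.l4 i j hij hns
    have : φ i xi ∈ Set.range (φ i) ∩ Set.range (φ j) :=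
      ⟨⟨xi, rfl⟩, ⟨xj, h.symm⟩⟩
    rw [h4] at this
    exact this
  obtain ⟨hY, hT⟩ := hL.l3' i j hij hsc xi xj h
  have hmem : ψ j xj ∈ Set.range (ψ i) ∩ Set.range (ψ j) := by
    rw [hZ.l3 i j hij hsc]
    exact ⟨S.T hij.le xi, ⟨xi, hY, rfl⟩, by rw [hT]⟩
  obtain ⟨xi', hxi'⟩ := hmem.1
  obtain ⟨hY', hT'⟩ := hZ.l3' i j hij hsc xi' xj hxi'
  have : xi' = xi := S.injOn_T i j hij hY' hY (by rw [← hT', ← hT])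
  rw [← hxi', this]

lemma compat (S : CIS) {L : Type v} [TopologicalSpace L] {φ : ∀ i, S.X i → L}
    {Z : Type w} [TopologicalSpace Z] {ψ : ∀ i, S.X i → Z}
    (hL : IsLimitSpace S L φ) (hZ : IsLimitSpace S Z ψ)
    {i j : ℕ} {xi : S.X i} {xj : S.X j}
    (h : φ i xi = φ j xj) : ψ i xi = ψ j xj := by
  rcases lt_trichotomy i j with hij | rfl | hij
  · exact compat_lt S hL hZ hij h
  · rw [(hL.embedding i).injective h]
  · exact (compat_lt S hL hZ hij h.symm).symm

theorem stmt10 (S : CIS) (L : Type v) [TopologicalSpace L] (φ : ∀ i, S.X i → L)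
    (Z : Type w) [TopologicalSpace Z] (ψ : ∀ i, S.X i → Z)
    (hL : IsFundamentalLimitSpace S L φ) (hZ : IsFundamentalLimitSpace S Z ψ) :
    ∃! β : L ≃ₜ Z, ∀ i, ψ i = ⇑β ∘ φ i := by
  have hcovL : ∀ x : L, ∃ p : Σ i, S.X i, φ p.1 p.2 = x := by
    intro x
    have hx : x ∈ ⋃ i, Set.range (φ i) := by rw [hL.covers]; trivial
    obtain ⟨i, ⟨xi, hxi⟩⟩ := Set.mem_iUnion.mp hx
    exact ⟨⟨i, xi⟩, hxi⟩
  have hcovZ : ∀ z : Z, ∃ p : Σ i, S.X i, ψ p.1 p.2 = z := by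
    intro z
    have hz : z ∈ ⋃ i, Set.range (ψ i) := by rw [hZ.covers]; trivial
    obtain ⟨i, ⟨xi, hxi⟩⟩ := Set.mem_iUnion.mp hz
    exact ⟨⟨i, xi⟩, hxi⟩
  choose p hp using hcovL
  choose q hq using hcovZ
  set β : L → Z := fun x => ψ (p x).1 (p x).2 with hβ
  set γ : Z → L := fun z => φ (q z).1 (q z).2 with hγ
  have hβφ : ∀ i xi, β (φ i xi) = ψ i xi := by
    intro i xi
    exact compat S hL.toIsLimitSpace hZ.toIsLimitSpace (hp (φ i xi))
  have hγψ : ∀ i xi, γ (ψ i xi) = φ i xi := by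
    intro i xi
    exact compat S hZ.toIsLimitSpace hL.toIsLimitSpace (hq (ψ i xi))
  have hleft : Function.LeftInverse γ β := by
    intro x
    conv_lhs => rw [← hp x]
    rw [hβφ, hγψ, hp x]
  have hright : Function.RightInverse γ β := by
    intro z
    conv_lhs => rw [← hq z]
    rw [hγψ, hβφ, hq z]
  have hcontβ : Continuous β := by
    rw [continuous_iff_isClosed]
    intro A hA
    rw [hL.weakTopology]
    intro i
    have : φ i ⁻¹' (β ⁻¹' A) = ψ i ⁻¹' A := by
      ext x; simp [hβφ i x]
    rw [this]
    exact hA.preimage (hZ.embedding i).continuous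
  have hcontγ : Continuous γ := by
    rw [continuous_iff_isClosed]
    intro A hA
    rw [hZ.weakTopology]
    intro i
    have : ψ i ⁻¹' (γ ⁻¹' A) = φ i ⁻¹' A := by
      ext x; simp [hγψ i x]
    rw [this]
    exact hA.preimage (hL.embedding i).continuous
  refine ⟨⟨⟨β, γ, hleft, hright⟩, hcontβ, hcontγ⟩, ?_, ?_⟩
  · intro i
    funext xi
    exact (hβφ i xi).symm
  · intro β' hβ'
    ext x
    conv_lhs => rw [← hp x]
    have h1 : β' (φ (p x).1 (p x).2) = ψ (p x).1 (p x).2 :=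
      (congrFun (hβ' (p x).1) (p x).2).symm
    rw [h1, ← hβφ, hp x]
    rfl
end

section
/- Let {X, φ_i} be a limit space for the CIS {X_i, Y_i, f_i} and suppose the collection {φ_i(X_i)}_{i∈ℕ} is a locally finite cover of X by closed sets (each φ_i(X_i) is closed in X and every point of X has a neighborhood meeting only finitely many of the sets φ_i(X_i)). Then {X, φ_i} is a fundamental limit space. -/
universe u v w

theorem stmt17 (S : CIS) (L : Type v) [TopologicalSpace L] (φ : ∀ i, S.X i → L)
    (hL : IsLimitSpace S L φ)
    (hclosed : ∀ i, IsClosed (Set.range (φ i)))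
    (hlf : LocallyFinite fun i => Set.range (φ i)) :
    IsFundamentalLimitSpace S L φ := by
  refine ⟨hL, fun A => ⟨fun hA i => hA.preimage (hL.embedding i).continuous, fun h => ?_⟩⟩
  have hce : ∀ i, Topology.IsClosedEmbedding (φ i) :=
    fun i => ⟨hL.embedding i, hclosed i⟩
  have hA : A = ⋃ i, φ i '' (φ i ⁻¹' A) := by
    ext x
    constructor
    · intro hx
      have : x ∈ ⋃ i, Set.range (φ i) := hL.covers ▸ Set.mem_univ x
      rcases Set.mem_iUnion.1 this with ⟨i, y, hy⟩
      exact Set.mem_iUnion.2 ⟨i, y, by simp [hy, hx], hy⟩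
    · rintro hx
      rcases Set.mem_iUnion.1 hx with ⟨i, y, hy, rfl⟩
      exact hy
  rw [hA]
  refine (hlf.subset fun i => Set.image_subset_range _ _).isClosed_iUnion fun i =>
    (hce i).isClosedMap _ (h i)
end

section
/- Let {X, φ_i} be a limit space for the CIS {X_i, Y_i, f_i} in which each X_i is a compact space. If X is Hausdorff and {φ_i(X_i)}_{i∈ℕ} is a locally finite cover of X, then {X, φ_i} is a fundamental limit space. -/
universe u v w

theorem stmt18 (S : CIS) (L : Type v) [TopologicalSpace L] (φ : ∀ i, S.X i → L)
    (hL : IsLimitSpace S L φ)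
    (hcompact : ∀ i, CompactSpace (S.X i)) (hT2 : T2Space L)
    (hlf : LocallyFinite fun i => Set.range (φ i)) :
    IsFundamentalLimitSpace S L φ := by
  refine ⟨hL, fun A => ⟨fun hA i => hA.preimage (hL.embedding i).continuous, fun h => ?_⟩⟩
  have hAeq : A = ⋃ i, A ∩ Set.range (φ i) := by
    rw [← Set.inter_iUnion, hL.covers, Set.inter_univ]
  rw [hAeq]
  refine (hlf.subset fun i => Set.inter_subset_right).isClosed_iUnion fun i => ?_
  rw [← Set.image_preimage_eq_inter_range]
  exact ((h i).isCompact.image (hL.embedding i).continuous).isClosed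
end
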